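/- Let Q = {(x,y,z) ∈ {0,1}³ | 1 ≤ x+y+z ≤ 2} ⊆ ℤ³ with the product order, and let m ∈ F with m ≠ 0. Define the thin persistence module M_m:(ℤ,≤)³→vect_F by M_m(i) = F if i ∈ Q and 0 otherwise, with M_m(i≤j) being multiplication by m if i = (0,1,0) and j = (1,1,0), the identity for any other comparable pair with both endpoints in Q, and 0 otherwise. Then M_m is indecomposable for every m ≠ 0, and M_m is isomorphic to the interval module FQ if and only if m = 1. Consequently, if F contains an element m ∉ {0,1}, there exists an indecomposable thin persistence module over (ℤ,≤)³ that is not isomorphic to any interval module. -/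

import Mathlib

/-- A persistence module over a preorder `P` with coefficients in a field `F`:
a functor `(P,≤) → Vect_F`, given by vector spaces `V p` and linear maps
`map : i ≤ j → (V i →ₗ[F] V j)` satisfying the functoriality equations. -/
structure PersistenceModule (F : Type) [Field F] (P : Type) [Preorder P] where
  V : P → Type
  [addCommGroup : ∀ p, AddCommGroup (V p)]
  [module : ∀ p, Module F (V p)]
  map : ∀ {i j : P}, i ≤ j → (V i →ₗ[F] V j)
  map_id : ∀ i : P, map (le_refl i) = LinearMap.id
  map_comp : ∀ {i j k : P} (hij : i ≤ j) (hjk : j ≤ k),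
    (map hjk).comp (map hij) = map (hij.trans hjk)

attribute [instance] PersistenceModule.addCommGroup PersistenceModule.module

/-- A zigzag path `a - x₁ - ⋯ - xₙ - b` in a preorder, where each consecutive
pair of points is comparable. -/
inductive Zigzag (P : Type) [Preorder P] : P → P → Type
  | single (a : P) : Zigzag P a a
  | consLe {a b c : P} (h : a ≤ b) (p : Zigzag P b c) : Zigzag P a c
  | consGe {a b c : P} (h : b ≤ a) (p : Zigzag P b c) : Zigzag P a c

/-- Convexity of a subset of a poset: `i ≤ j ≤ k` with `i, k ∈ J` implies `j ∈ J`. -/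
def PosetConvex {P : Type} [Preorder P] (J : Set P) : Prop :=
  ∀ i ∈ J, ∀ k ∈ J, ∀ j : P, i ≤ j → j ≤ k → j ∈ J

/-- Connectedness: any two points of `J` are joined by a finite zigzag path inside `J`. -/
def ZigzagConnected {P : Type} [Preorder P] (J : Set P) : Prop :=
  ∀ a b : J, Nonempty (Zigzag (↥J) a b)

open Classical in
/-- The interval (polytope) module `F𝕀` on a convex subset `I`: the vector space `F`
at points of `I` (realized as the submodule `⊤ ≤ F`) and `0` (the submodule `⊥`)
elsewhere, with identity maps for comparable pairs inside `I` and zero maps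
otherwise. -/
noncomputable def intervalModule (F : Type) [Field F] {P : Type} [Preorder P]
    (I : Set P) (hconv : PosetConvex I) : PersistenceModule F P where
  V p := ↥(if p ∈ I then (⊤ : Submodule F F) else ⊥)
  addCommGroup _ := inferInstance
  module _ := inferInstance
  map {i j} _ :=
    if hij : i ∈ I ∧ j ∈ I then
      Submodule.inclusion (by simp [hij.1, hij.2])
    else 0
  map_id := by
    intro i
    try dsimp only
    by_cases hi : i ∈ I
    · rw [dif_pos (show i ∈ I ∧ i ∈ I from ⟨hi, hi⟩)]
      ext x
      rfl
    · rw [dif_neg (show ¬(i ∈ I ∧ i ∈ I) from fun h => hi h.1)]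
      have : Subsingleton ↥(if i ∈ I then (⊤ : Submodule F F) else ⊥) := by
        rw [if_neg hi]; infer_instance
      exact Subsingleton.elim _ _
  map_comp := by
    intro i j k hij hjk
    try dsimp only
    by_cases hi : i ∈ I
    · by_cases hk : k ∈ I
      · have hj : j ∈ I := hconv i hi k hk j hij hjk
        rw [dif_pos (show i ∈ I ∧ j ∈ I from ⟨hi, hj⟩),
          dif_pos (show j ∈ I ∧ k ∈ I from ⟨hj, hk⟩),
          dif_pos (show i ∈ I ∧ k ∈ I from ⟨hi, hk⟩)]
        ext x
        rfl
      · rw [dif_neg (show ¬(j ∈ I ∧ k ∈ I) from fun h => hk h.2),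
          dif_neg (show ¬(i ∈ I ∧ k ∈ I) from fun h => hk h.2)]
        have : Subsingleton ↥(if k ∈ I then (⊤ : Submodule F F) else ⊥) := by
          rw [if_neg hk]; infer_instance
        exact Subsingleton.elim _ _
    · rw [dif_neg (show ¬(i ∈ I ∧ j ∈ I) from fun h => hi h.1),
        dif_neg (show ¬(i ∈ I ∧ k ∈ I) from fun h => hi h.1)]
      ext x
      simp

/-- A subrepresentation of a persistence module: a family of submodules closed
under the structure maps. -/
structure Subrep {F : Type} [Field F] {P : Type} [Preorder P] (M : PersistenceModule F P) where
  S : ∀ p, Submodule F (M.V p)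
  stable : ∀ {i j : P} (h : i ≤ j), Submodule.map (M.map h) (S i) ≤ S j

/-- A persistence module is decomposable if it is the (internal) direct sum of two
nonzero subrepresentations. -/
def PersistenceModule.Decomposable {F : Type} [Field F] {P : Type} [Preorder P]
    (M : PersistenceModule F P) : Prop :=
  ∃ A B : Subrep M, (∃ p, A.S p ≠ ⊥) ∧ (∃ p, B.S p ≠ ⊥) ∧ ∀ p, IsCompl (A.S p) (B.S p)

/-- Isomorphism of persistence modules: a family of linear equivalences commuting
with the structure maps. -/
def IsIsomorphic {F : Type} [Field F] {P : Type} [Preorder P]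
    (M N : PersistenceModule F P) : Prop :=
  ∃ f : ∀ p, M.V p ≃ₗ[F] N.V p, ∀ (i j : P) (h : i ≤ j),
    (N.map h).comp (f i).toLinearMap = (f j).toLinearMap.comp (M.map h)

/-- The index set `Q = {(x,y,z) ∈ {0,1}³ | 1 ≤ x+y+z ≤ 2} ⊆ ℤ³`. -/
def Qset : Set (ℤ × ℤ × ℤ) :=
  {i | (i.1 = 0 ∨ i.1 = 1) ∧ (i.2.1 = 0 ∨ i.2.1 = 1) ∧ (i.2.2 = 0 ∨ i.2.2 = 1) ∧
    1 ≤ i.1 + i.2.1 + i.2.2 ∧ i.1 + i.2.1 + i.2.2 ≤ 2}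

theorem Qset_convex : PosetConvex Qset := by
  rintro ⟨x1, y1, z1⟩ hi ⟨x3, y3, z3⟩ hk ⟨x2, y2, z2⟩ hij hjk
  simp only [Qset, Set.mem_setOf_eq, Prod.mk_le_mk] at hi hk hij hjk ⊢
  omega

open Classical in
/-- The thin persistence module `M_m` over `(ℤ,≤)³`: it is `F` on `Q` and `0`
elsewhere; the structure map is multiplication by `m` from `(0,1,0)` to `(1,1,0)`,
the identity on every other comparable pair inside `Q`, and `0` otherwise. -/
noncomputable def Mex (F : Type) [Field F] (m : F) : PersistenceModule F (ℤ × ℤ × ℤ) where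
  V i := ↥(if i ∈ Qset then (⊤ : Submodule F F) else ⊥)
  addCommGroup _ := inferInstance
  module _ := inferInstance
  map {i j} _ :=
    if hij : i ∈ Qset ∧ j ∈ Qset then
      (if i = ((0 : ℤ), (1 : ℤ), (0 : ℤ)) ∧ j = ((1 : ℤ), (1 : ℤ), (0 : ℤ)) then
        m • Submodule.inclusion (le_of_eq (by simp [hij.1, hij.2]))
      else Submodule.inclusion (le_of_eq (by simp [hij.1, hij.2])))
    else 0
  map_id := by
    intro i
    try dsimp only
    by_cases hi : i ∈ Qset
    · rw [dif_pos (show i ∈ Qset ∧ i ∈ Qset from ⟨hi, hi⟩),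
        if_neg (show ¬(i = ((0:ℤ),(1:ℤ),(0:ℤ)) ∧ i = ((1:ℤ),(1:ℤ),(0:ℤ))) from
          fun h => by rw [h.1] at h; exact absurd h.2 (by decide))]
      ext x
      rfl
    · rw [dif_neg (show ¬(i ∈ Qset ∧ i ∈ Qset) from fun h => hi h.1)]
      have : Subsingleton ↥(if i ∈ Qset then (⊤ : Submodule F F) else ⊥) := by
        rw [if_neg hi]; infer_instance
      exact Subsingleton.elim _ _
  map_comp := by
    intro i j k hij hjk
    try dsimp only
    by_cases hi : i ∈ Qset
    · by_cases hk : k ∈ Qset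
      · have hj : j ∈ Qset := Qset_convex i hi k hk j hij hjk
        rw [dif_pos (show i ∈ Qset ∧ j ∈ Qset from ⟨hi, hj⟩),
          dif_pos (show j ∈ Qset ∧ k ∈ Qset from ⟨hj, hk⟩),
          dif_pos (show i ∈ Qset ∧ k ∈ Qset from ⟨hi, hk⟩)]
        by_cases hik : i = ((0:ℤ),(1:ℤ),(0:ℤ)) ∧ k = ((1:ℤ),(1:ℤ),(0:ℤ))
        · rw [if_pos hik]
          -- j is squeezed between (0,1,0) and (1,1,0), hence equals one of them
          have hjcase : j = ((0:ℤ),(1:ℤ),(0:ℤ)) ∨ j = ((1:ℤ),(1:ℤ),(0:ℤ)) := by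
            obtain ⟨j1, j2, j3⟩ := j
            rw [hik.1] at hij
            rw [hik.2] at hjk
            simp only [Prod.mk_le_mk, Prod.mk.injEq] at hij hjk ⊢
            omega
          rcases hjcase with hj' | hj'
          · rw [if_neg (show ¬(i = ((0:ℤ),(1:ℤ),(0:ℤ)) ∧ j = ((1:ℤ),(1:ℤ),(0:ℤ))) from
                fun h => by rw [hj'] at h; exact absurd h.2 (by decide)),
              if_pos (show j = ((0:ℤ),(1:ℤ),(0:ℤ)) ∧ k = ((1:ℤ),(1:ℤ),(0:ℤ)) from ⟨hj', hik.2⟩)]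
            ext x
            rfl
          · rw [if_pos (show i = ((0:ℤ),(1:ℤ),(0:ℤ)) ∧ j = ((1:ℤ),(1:ℤ),(0:ℤ)) from ⟨hik.1, hj'⟩),
              if_neg (show ¬(j = ((0:ℤ),(1:ℤ),(0:ℤ)) ∧ k = ((1:ℤ),(1:ℤ),(0:ℤ))) from
                fun h => by rw [hj'] at h; exact absurd h.1 (by decide))]
            ext x
            rfl
        · -- (i,k) is not the special pair; then neither (i,j) nor (j,k) can be special
          have hij' : ¬(i = ((0:ℤ),(1:ℤ),(0:ℤ)) ∧ j = ((1:ℤ),(1:ℤ),(0:ℤ))) := by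
            rintro ⟨h1, h2⟩
            apply hik
            refine ⟨h1, ?_⟩
            obtain ⟨k1, k2, k3⟩ := k
            rw [h2] at hjk
            simp only [Qset, Set.mem_setOf_eq] at hk
            simp only [Prod.mk_le_mk, Prod.mk.injEq] at hjk ⊢
            omega
          have hjk' : ¬(j = ((0:ℤ),(1:ℤ),(0:ℤ)) ∧ k = ((1:ℤ),(1:ℤ),(0:ℤ))) := by
            rintro ⟨h1, h2⟩
            apply hik
            refine ⟨?_, h2⟩
            obtain ⟨i1, i2, i3⟩ := i
            rw [h1] at hij
            simp only [Qset, Set.mem_setOf_eq] at hi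
            simp only [Prod.mk_le_mk, Prod.mk.injEq] at hij ⊢
            omega
          rw [if_neg hij', if_neg hjk', if_neg hik]
          ext x
          rfl
      · rw [dif_neg (show ¬(j ∈ Qset ∧ k ∈ Qset) from fun h => hk h.2),
          dif_neg (show ¬(i ∈ Qset ∧ k ∈ Qset) from fun h => hk h.2)]
        have : Subsingleton ↥(if k ∈ Qset then (⊤ : Submodule F F) else ⊥) := by
          rw [if_neg hk]; infer_instance
        exact Subsingleton.elim _ _
    · rw [dif_neg (show ¬(i ∈ Qset ∧ j ∈ Qset) from fun h => hi h.1),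
        dif_neg (show ¬(i ∈ Qset ∧ k ∈ Qset) from fun h => hi h.1)]
      ext x
      simp

/-!
Over a field, a subrepresentation of a thin module is, at every point, either `0` or everything.
If all structure maps inside the support are surjective (for `M_m` this is `m ≠ 0`), the points
where a direct summand is everything are closed under going up; as the same holds for the
complementary summand, they are closed under going down too. Since `Q` is zigzag-connected, one of
the two summands vanishes.

An isomorphism `M_m ≅ FQ` acts on the line at `p ∈ Q` by a nonzero scalar `λ p`, and naturality
gives `λ i = c i j * λ j`, where `c i j` is the structure constant of `M_m`. Around the hexagon
`(1,0,0) ≤ (1,1,0) ≥ (0,1,0) ≤ (0,1,1) ≥ (0,0,1) ≤ (1,0,1) ≥ (1,0,0)` only one constant differs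
from `1`, namely `m`, hence `m = 1`. An isomorphism with an interval module `F𝕀` preserves
supports, so it forces `𝕀 = Q`.
-/

section Lines

variable {F : Type} [Field F]

theorem Submodule.eq_bot_or_eq_top_of_rank_le_one {V : Type} [AddCommGroup V] [Module F V]
    (hV : Module.rank F V ≤ 1) (T : Submodule F V) : T = ⊥ ∨ T = ⊤ := by
  refine or_iff_not_imp_left.2 fun hT => eq_top_iff.2 fun v _ => ?_
  obtain ⟨v₀, hv₀⟩ := rank_le_one_iff.1 hV
  obtain ⟨x, hxT, hx0⟩ := Submodule.exists_mem_ne_zero_of_ne_bot hT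
  obtain ⟨r, rfl⟩ := hv₀ x
  obtain ⟨s, rfl⟩ := hv₀ v
  have hr : r ≠ 0 := by rintro rfl; simp at hx0
  simpa [smul_smul, hr] using T.smul_mem (s * r⁻¹) hxT

theorem Submodule.coe_linearMap_apply_eq_mul {S T : Submodule F F} (g : S →ₗ[F] T)
    (h1 : (1 : F) ∈ S) (x : S) : (g x : F) = x * g ⟨1, h1⟩ := by
  have hx : x = (x : F) • (⟨1, h1⟩ : S) := Subtype.ext (mul_one _).symm
  conv_lhs => rw [hx, map_smul]
  rfl

theorem mem_ite_top_bot {q : Prop} [Decidable q] (hq : q) (x : F) :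
    x ∈ (if q then (⊤ : Submodule F F) else ⊥) := by
  simp [hq]

theorem nontrivial_ite_top_bot_iff (q : Prop) [Decidable q] :
    Nontrivial ↥(if q then (⊤ : Submodule F F) else ⊥) ↔ q := by
  split_ifs with hq
  · simpa [hq] using Submodule.nontrivial_iff_ne_bot.2 (top_ne_bot (α := Submodule F F))
  · simpa [hq] using not_nontrivial (⊥ : Submodule F F)

end Lines

namespace Zigzag

variable {P : Type} [Preorder P]

def append {a b c : P} : Zigzag P a b → Zigzag P b c → Zigzag P a c
  | single _, q => q
  | consLe h p, q => consLe h (p.append q)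
  | consGe h p, q => consGe h (p.append q)

def reverse {a b : P} : Zigzag P a b → Zigzag P b a
  | single a => single a
  | consLe h p => p.reverse.append (consGe h (single _))
  | consGe h p => p.reverse.append (consLe h (single _))

theorem iff_of_forall_le_iff {T : P → Prop} (hT : ∀ a b, a ≤ b → (T a ↔ T b)) {a b : P} :
    Zigzag P a b → (T a ↔ T b)
  | single _ => Iff.rfl
  | consLe h p => (hT _ _ h).trans (iff_of_forall_le_iff hT p)
  | consGe h p => (hT _ _ h).symm.trans (iff_of_forall_le_iff hT p)

end Zigzag

namespace ZigzagConnected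

variable {P : Type} [Preorder P] {J : Set P}

theorem of_forall_zigzag_to (c : J) (h : ∀ a : J, Nonempty (Zigzag J a c)) :
    ZigzagConnected J :=
  fun a b => ⟨(h a).some.append (h b).some.reverse⟩

theorem iff_of_forall_le_iff (hJ : ZigzagConnected J) {T : P → Prop}
    (hT : ∀ a ∈ J, ∀ b ∈ J, a ≤ b → (T a ↔ T b)) {a b : P} (ha : a ∈ J) (hb : b ∈ J) :
    T a ↔ T b :=
  (hJ ⟨a, ha⟩ ⟨b, hb⟩).some.iff_of_forall_le_iff (T := fun x : J => T x)
    fun x y hxy => hT x x.2 y y.2 hxy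

end ZigzagConnected

section Indecomposable

variable {F : Type} [Field F] {P : Type} [Preorder P] {M : PersistenceModule F P}

theorem Subrep.eq_top_of_le_of_surjective (C : Subrep M) {i j : P} (h : i ≤ j)
    (hsurj : Function.Surjective (M.map h)) (hi : C.S i = ⊤) : C.S j = ⊤ := by
  simpa [hi, Submodule.map_top, LinearMap.range_eq_top.2 hsurj] using C.stable h

theorem PersistenceModule.not_decomposable_of_connected_support (S : Set P)
    (hthin : ∀ p, Module.rank F (M.V p) ≤ 1) (hsupp : ∀ p, Nontrivial (M.V p) ↔ p ∈ S)
    (hsurj : ∀ {i j}, i ∈ S → j ∈ S → ∀ h : i ≤ j, Function.Surjective (M.map h))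
    (hS : ZigzagConnected S) : ¬ M.Decomposable := by
  rintro ⟨A, B, ⟨p, hAp⟩, ⟨q, hBq⟩, hcompl⟩
  have bot_or_top (C : Subrep M) (p : P) : C.S p = ⊥ ∨ C.S p = ⊤ :=
    Submodule.eq_bot_or_eq_top_of_rank_le_one (hthin p) (C.S p)
  have mem_of_ne_bot {C : Subrep M} {p : P} (hC : C.S p ≠ ⊥) : p ∈ S := by
    by_contra hp
    have := not_nontrivial_iff_subsingleton.1 (mt (hsupp p).1 hp)
    exact hC (Subsingleton.elim _ _)
  have bot_ne_top {p : P} (hp : p ∈ S) : (⊥ : Submodule F (M.V p)) ≠ ⊤ :=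
    haveI := (hsupp p).2 hp; bot_ne_top
  have hA : ∀ i ∈ S, ∀ j ∈ S, i ≤ j → (A.S i = ⊤ ↔ A.S j = ⊤) := by
    intro i hi j hj hij
    refine ⟨A.eq_top_of_le_of_surjective hij (hsurj hi hj hij), fun hAj => ?_⟩
    refine (bot_or_top A i).resolve_left fun hAi => bot_ne_top hj ?_
    have hBj := B.eq_top_of_le_of_surjective hij (hsurj hi hj hij)
      (eq_top_of_bot_isCompl (hAi ▸ hcompl i))
    exact (eq_bot_of_top_isCompl (hAj ▸ hcompl j)).symm.trans hBj
  have hq := mem_of_ne_bot hBq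
  have hAq : A.S q = ⊤ :=
    (hS.iff_of_forall_le_iff hA (mem_of_ne_bot hAp) hq).1 ((bot_or_top A p).resolve_left hAp)
  exact hBq (eq_bot_of_top_isCompl (hAq ▸ hcompl q))

end Indecomposable

section Modules

variable {F : Type} [Field F]

theorem IsIsomorphic.nontrivial_iff {P : Type} [Preorder P] {M N : PersistenceModule F P}
    (hMN : IsIsomorphic M N) (p : P) : Nontrivial (M.V p) ↔ Nontrivial (N.V p) :=
  let ⟨f, _⟩ := hMN
  (f p).toEquiv.nontrivial_congr

open Classical in
theorem intervalModule_nontrivial_V_iff {P : Type} [Preorder P] {I : Set P}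
    (hconv : PosetConvex I) (p : P) : Nontrivial ((intervalModule F I hconv).V p) ↔ p ∈ I :=
  nontrivial_ite_top_bot_iff _

theorem intervalModule_map_val {P : Type} [Preorder P] {I : Set P} (hconv : PosetConvex I)
    {i j : P} (hi : i ∈ I) (hj : j ∈ I) (h : i ≤ j) (x : (intervalModule F I hconv).V i) :
    ((intervalModule F I hconv).map h x).val = x.val := by
  simp only [intervalModule, dif_pos (And.intro hi hj)]
  rfl

theorem Qset_cases {p : ℤ × ℤ × ℤ} (hp : p ∈ Qset) :
    p = (1, 0, 0) ∨ p = (0, 1, 0) ∨ p = (0, 0, 1) ∨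
    p = (1, 1, 0) ∨ p = (1, 0, 1) ∨ p = (0, 1, 1) := by
  obtain ⟨x, y, z⟩ := p
  obtain ⟨rfl | rfl, rfl | rfl, rfl | rfl, hlo, hhi⟩ := hp <;> simp at hlo hhi ⊢

theorem Qset_zigzagConnected : ZigzagConnected Qset := by
  let pt (x y z : ℤ) (h : (x, y, z) ∈ Qset := by unfold Qset; decide) : Qset := ⟨(x, y, z), h⟩
  refine .of_forall_zigzag_to (pt 1 1 0) fun ⟨p, hp⟩ => ?_
  rcases Qset_cases hp with rfl | rfl | rfl | rfl | rfl | rfl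
  · exact ⟨.consLe (b := pt 1 1 0) (Subtype.mk_le_mk.2 (by decide)) (.single _)⟩
  · exact ⟨.consLe (b := pt 1 1 0) (Subtype.mk_le_mk.2 (by decide)) (.single _)⟩
  · exact ⟨.consLe (b := pt 1 0 1) (Subtype.mk_le_mk.2 (by decide)) <|
      .consGe (b := pt 1 0 0) (Subtype.mk_le_mk.2 (by decide)) <|
      .consLe (b := pt 1 1 0) (Subtype.mk_le_mk.2 (by decide)) (.single _)⟩
  · exact ⟨.single _⟩
  · exact ⟨.consGe (b := pt 1 0 0) (Subtype.mk_le_mk.2 (by decide)) <|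
      .consLe (b := pt 1 1 0) (Subtype.mk_le_mk.2 (by decide)) (.single _)⟩
  · exact ⟨.consGe (b := pt 0 1 0) (Subtype.mk_le_mk.2 (by decide)) <|
      .consLe (b := pt 1 1 0) (Subtype.mk_le_mk.2 (by decide)) (.single _)⟩

theorem Mex_rank_V_le_one (m : F) (p : ℤ × ℤ × ℤ) : Module.rank F ((Mex F m).V p) ≤ 1 :=
  (Submodule.rank_le _).trans_eq (Module.rank_self F)

open Classical in
theorem Mex_nontrivial_V_iff (m : F) (p : ℤ × ℤ × ℤ) : Nontrivial ((Mex F m).V p) ↔ p ∈ Qset :=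
  nontrivial_ite_top_bot_iff _

open Classical in
theorem Mex_map_val (m : F) {i j : ℤ × ℤ × ℤ} (hi : i ∈ Qset) (hj : j ∈ Qset) (h : i ≤ j)
    (x : (Mex F m).V i) :
    ((Mex F m).map h x).val = (if i = (0, 1, 0) ∧ j = (1, 1, 0) then m else 1) * x.val := by
  simp only [Mex, dif_pos (And.intro hi hj)]
  by_cases hs : i = (0, 1, 0) ∧ j = (1, 1, 0)
  · rw [if_pos hs, if_pos hs]; rfl
  · rw [if_neg hs, if_neg hs, one_mul]; rfl

theorem Mex_map_surjective {m : F} (hm : m ≠ 0) {i j : ℤ × ℤ × ℤ} (hi : i ∈ Qset)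
    (hj : j ∈ Qset) (h : i ≤ j) : Function.Surjective ((Mex F m).map h) := by
  classical
  set c : F := if i = (0, 1, 0) ∧ j = (1, 1, 0) then m else 1 with hc
  have hc0 : c ≠ 0 := by rw [hc]; split_ifs <;> simp [hm]
  intro y
  refine ⟨⟨c⁻¹ * y.val, mem_ite_top_bot hi _⟩, Subtype.ext ?_⟩
  exact (Mex_map_val m hi hj h _).trans (mul_inv_cancel_left₀ hc0 _)

theorem Mex_one_map_eq {i j : ℤ × ℤ × ℤ} (h : i ≤ j) :
    (Mex F 1).map h = (intervalModule F Qset Qset_convex).map h := by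
  by_cases hj : j ∈ Qset
  · by_cases hi : i ∈ Qset
    · refine LinearMap.ext fun x => Subtype.ext ?_
      calc ((Mex F 1).map h x).val = x.val := by rw [Mex_map_val (1 : F) hi hj h]; simp
        _ = ((intervalModule F Qset Qset_convex).map h x).val :=
          (intervalModule_map_val Qset_convex hi hj h x).symm
    · have := not_nontrivial_iff_subsingleton.1 (mt (Mex_nontrivial_V_iff (1 : F) i).1 hi)
      exact Subsingleton.elim _ _
  · have := not_nontrivial_iff_subsingleton.1 (mt (Mex_nontrivial_V_iff (1 : F) j).1 hj)
    exact Subsingleton.elim _ _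

theorem eq_one_of_isIsomorphic_Mex_intervalModule {m : F}
    (hiso : IsIsomorphic (Mex F m) (intervalModule F Qset Qset_convex)) : m = 1 := by
  classical
  obtain ⟨f, hf⟩ := hiso
  let scale (p : ℤ × ℤ × ℤ) (hp : p ∈ Qset) : F := (f p ⟨1, mem_ite_top_bot hp 1⟩).val
  have scale_ne_zero {p} (hp : p ∈ Qset) : scale p hp ≠ 0 := fun h0 =>
    one_ne_zero (congrArg Subtype.val ((f p).map_eq_zero_iff.1 (Subtype.ext h0)))
  have scale_eq {i j} (hi : i ∈ Qset) (hj : j ∈ Qset) (h : i ≤ j) :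
      scale i hi = (if i = (0, 1, 0) ∧ j = (1, 1, 0) then m else 1) * scale j hj :=
    calc scale i hi
        = ((intervalModule F Qset Qset_convex).map h (f i ⟨1, mem_ite_top_bot hi 1⟩)).val :=
          (intervalModule_map_val Qset_convex hi hj h _).symm
      _ = (f j ((Mex F m).map h ⟨1, mem_ite_top_bot hi 1⟩)).val :=
          congrArg Subtype.val (LinearMap.congr_fun (hf i j h) _)
      _ = ((Mex F m).map h ⟨1, mem_ite_top_bot hi 1⟩).val * scale j hj :=
          Submodule.coe_linearMap_apply_eq_mul (f j).toLinearMap (mem_ite_top_bot hj 1) _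
      _ = _ := congrArg (· * scale j hj) ((Mex_map_val m hi hj h _).trans (mul_one _))
  have q₁ : (1, 0, 0) ∈ Qset := by unfold Qset; decide
  have q₂ : (0, 1, 0) ∈ Qset := by unfold Qset; decide
  have q₃ : (0, 0, 1) ∈ Qset := by unfold Qset; decide
  have q₁₂ : (1, 1, 0) ∈ Qset := by unfold Qset; decide
  have q₁₃ : (1, 0, 1) ∈ Qset := by unfold Qset; decide
  have q₂₃ : (0, 1, 1) ∈ Qset := by unfold Qset; decide
  have hcycle : m * scale _ q₁₂ = scale _ q₁₂ :=
    calc m * scale _ q₁₂ = scale _ q₂ := by rw [scale_eq q₂ q₁₂ (by decide), if_pos (by decide)]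
      _ = scale _ q₂₃ := by rw [scale_eq q₂ q₂₃ (by decide), if_neg (by decide), one_mul]
      _ = scale _ q₃ := by rw [scale_eq q₃ q₂₃ (by decide), if_neg (by decide), one_mul]
      _ = scale _ q₁₃ := by rw [scale_eq q₃ q₁₃ (by decide), if_neg (by decide), one_mul]
      _ = scale _ q₁ := by rw [scale_eq q₁ q₁₃ (by decide), if_neg (by decide), one_mul]
      _ = scale _ q₁₂ := by rw [scale_eq q₁ q₁₂ (by decide), if_neg (by decide), one_mul]
  exact (mul_left_eq_self₀.1 hcycle).resolve_right (scale_ne_zero q₁₂)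

theorem Mex_isIsomorphic_intervalModule_iff {m : F} :
    IsIsomorphic (Mex F m) (intervalModule F Qset Qset_convex) ↔ m = 1 := by
  refine ⟨eq_one_of_isIsomorphic_Mex_intervalModule, ?_⟩
  rintro rfl
  exact ⟨fun p => LinearEquiv.refl F _, fun i j h => by rw [Mex_one_map_eq h]; rfl⟩

theorem eq_Qset_of_isIsomorphic_Mex_intervalModule {m : F} {I : Set (ℤ × ℤ × ℤ)}
    {hconv : PosetConvex I} (hiso : IsIsomorphic (Mex F m) (intervalModule F I hconv)) :
    I = Qset :=
  Set.ext fun p => by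
    rw [← intervalModule_nontrivial_V_iff (F := F) hconv, ← hiso.nontrivial_iff,
      Mex_nontrivial_V_iff]

end Modules

/-- For every `m ≠ 0` the module `M_m` is thin and indecomposable,
and `M_m` is isomorphic to the interval module `FQ` if and only if `m = 1`.
Consequently, if `m ∉ {0,1}`, there is an indecomposable thin persistence module over
`(ℤ,≤)³` not isomorphic to any interval module. -/
theorem statement15 (F : Type) [Field F] (m : F) (hm : m ≠ 0) :
    (∀ i, Module.rank F ((Mex F m).V i) ≤ 1) ∧
    ¬ (Mex F m).Decomposable ∧
    (IsIsomorphic (Mex F m) (intervalModule F Qset Qset_convex) ↔ m = 1) ∧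
    (m ≠ 1 →
      ∃ M' : PersistenceModule F (ℤ × ℤ × ℤ),
        (∀ i, Module.rank F (M'.V i) ≤ 1) ∧ ¬ M'.Decomposable ∧
        ∀ (I : Set (ℤ × ℤ × ℤ)) (hconv : PosetConvex I), ZigzagConnected I →
          ¬ IsIsomorphic M' (intervalModule F I hconv)) := by
  have hthin := Mex_rank_V_le_one m
  have hindec : ¬ (Mex F m).Decomposable :=
    PersistenceModule.not_decomposable_of_connected_support Qset hthin (Mex_nontrivial_V_iff m)
      (Mex_map_surjective hm) Qset_zigzagConnected
  refine ⟨hthin, hindec, Mex_isIsomorphic_intervalModule_iff,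
    fun hm1 => ⟨Mex F m, hthin, hindec, fun I hconv _ hiso => ?_⟩⟩
  obtain rfl := eq_Qset_of_isIsomorphic_Mex_intervalModule hiso
  exact hm1 (Mex_isIsomorphic_intervalModule_iff.1 hiso)
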